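/- Let m ∈ ℕ, M, N ∈ ℕ, c ∈ ℂ*, and let a₁,…,a_M, b₁,…,b_N ∈ ℂ* be such that the multisets {a₁,…,a_M} and {b₁,…,b_N} are disjoint, and define f(z) = c·z^{-(m+3)}·∏_{j=1}^{M}(z-a_j) / ∏_{j=1}^{N}(z-b_j). If f(-1/conj(z)) = -conj(z⁴·f(z)) for every z ∈ ℂ* at which both sides are defined, then the multiset {a₁,…,a_M} equals the multiset {-1/conj(a₁),…,-1/conj(a_M)} and the multiset {b₁,…,b_N} equals the multiset {-1/conj(b₁),…,-1/conj(b_N)}; in particular M and N are even and the a_j (respectively b_j) are grouped into M/2 (respectively N/2) pairs of antipodal points of ℂ*. -/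

import Mathlib

/-!
Write `x* = -1/conj x` for the antipode. Conjugating the functional equation at `z` and clearing
denominators gives the polynomial identity
`k₁ z^{2m+6+N} ∏ (z - a*_j) ∏ (z - b_j) = k₂ z^{M+4} ∏ (z - a_j) ∏ (z - b*_j)`,
valid at all but finitely many `z` and hence identically. Comparing roots away from `0` gives
`{a*_j} + {b_j} = {a_j} + {b*_j}`; as `x ↦ x*` is injective and the `a_j` and `b_j` are disjoint,
this splits into `{a*_j} = {a_j}` and `{b_j} = {b*_j}`. Finally `x ↦ x*` is an involution without
fixed points on `ℂ*` (`x* = x` would mean `|x|² = -1`), so an invariant multiset in `ℂ*` falls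
into pairs `{x, x*}` and has even cardinality.
-/

open ComplexConjugate Filter

theorem Multiset.even_card_of_map_eq_self {α : Type*} {σ : α → α}
    (hσ : Function.Involutive σ) {s : Multiset α} (hs : s.map σ = s)
    (hfix : ∀ x ∈ s, σ x ≠ x) : Even (card s) := by
  classical
  have hcount : ∀ x, s.count (σ x) = s.count x := fun x => by
    conv_lhs => rw [← hs]
    exact count_map_eq_count' σ s hσ.injective x
  rw [← ZMod.natCast_eq_zero_iff_even, ← toFinset_sum_count_eq, Nat.cast_sum]
  refine Finset.sum_involution (fun x _ => σ x) (fun x _ => ?_)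
    (fun x hx _ => hfix x (mem_toFinset.1 hx)) (fun x hx => ?_) (fun x _ => hσ x)
  · rw [hcount]
    exact CharTwo.add_self_eq_zero _
  · rw [mem_toFinset] at hx ⊢
    rw [← hs]
    exact mem_map_of_mem σ hx

theorem Multiset.eq_of_add_eq_add_of_disjoint {α : Type*} {s t u v : Multiset α}
    (h : s + t = u + v) (hsv : Disjoint s v) (htu : Disjoint t u) : s = u := by
  classical
  ext x
  have hx := congrArg (count x) h
  simp only [count_add] at hx
  have h1 : 0 < s.count x → v.count x = 0 := fun hs =>
    count_eq_zero.2 (disjoint_left.1 hsv (count_pos.1 hs))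
  have h2 : 0 < u.count x → t.count x = 0 := fun hu =>
    count_eq_zero.2 (disjoint_left.1 htu.symm (count_pos.1 hu))
  omega

theorem Multiset.disjoint_nsmul_singleton {α : Type*} {s : Multiset α} {a : α} (n : ℕ)
    (ha : a ∉ s) : Disjoint s (n • {a}) :=
  disjoint_of_subset_right (fun _ hx => (mem_nsmul.1 hx).2) (disjoint_singleton.2 ha)

open Polynomial in
theorem Multiset.eq_of_infinite_mul_prod_map_sub_eq {K : Type*} [Field K] {k₁ k₂ : K}
    (hk₁ : k₁ ≠ 0) (hk₂ : k₂ ≠ 0) {s t : Multiset K}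
    (h : {z | k₁ * (s.map (z - ·)).prod = k₂ * (t.map (z - ·)).prod}.Infinite) : s = t := by
  have hpoly : C k₁ * (s.map (X - C ·)).prod = C k₂ * (t.map (X - C ·)).prod := by
    refine eq_of_infinite_eval_eq _ _ (h.mono fun z hz => ?_)
    simpa [eval_multiset_prod, Multiset.map_map] using hz
  simpa [roots_C_mul, hk₁, hk₂, roots_multiset_prod_X_sub_C] using congrArg roots hpoly

theorem Multiset.prod_map_sub_ne_zero {K : Type*} [Field K] {s : Multiset K} {z : K}
    (hz : z ∉ s) : (s.map (z - ·)).prod ≠ 0 :=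
  prod_ne_zero fun h => by
    obtain ⟨x, hx, hzx⟩ := mem_map.1 h
    exact hz (sub_eq_zero.1 hzx ▸ hx)

noncomputable def antipode (z : ℂ) : ℂ := -1 / conj z

theorem antipode_involutive : Function.Involutive antipode := fun z => by
  simp [antipode]

theorem antipode_injective : Function.Injective antipode := antipode_involutive.injective

@[simp] theorem antipode_eq_zero {z : ℂ} : antipode z = 0 ↔ z = 0 := by
  simp [antipode]

@[simp] theorem conj_antipode (z : ℂ) : conj (antipode z) = -1 / z := by
  simp [antipode]

theorem antipode_ne_self {z : ℂ} (hz : z ≠ 0) : antipode z ≠ z := by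
  intro h
  rw [antipode, div_eq_iff ((map_ne_zero conj).2 hz), Complex.mul_conj] at h
  have := congrArg Complex.re h
  simp only [Complex.neg_re, Complex.one_re, Complex.ofReal_re] at this
  linarith [Complex.normSq_nonneg z]

theorem neg_inv_sub_conj_mul {x z : ℂ} (hx : x ≠ 0) (hz : z ≠ 0) :
    (-1 / z - conj x) * z = -1 * conj x * (z - antipode x) := by
  rw [antipode]
  field_simp [(map_ne_zero conj).2 hx]
  ring

theorem prod_map_neg_inv_sub_conj_mul_pow {s : Multiset ℂ} (hs : 0 ∉ s) {z : ℂ}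
    (hz : z ≠ 0) :
    (s.map (-1 / z - conj ·)).prod * z ^ Multiset.card s =
      (-1) ^ Multiset.card s * (s.map conj).prod * (s.map (z - antipode ·)).prod := by
  have := congrArg Multiset.prod <|
    Multiset.map_congr rfl fun x hx => neg_inv_sub_conj_mul (ne_of_mem_of_not_mem hx hs) hz
  rw [Multiset.prod_map_mul, Multiset.prod_map_mul, Multiset.prod_map_mul] at this
  simpa using this

theorem zero_notMem_map_antipode {s : Multiset ℂ} (hs : 0 ∉ s) : 0 ∉ s.map antipode :=
  fun h => by
    obtain ⟨_, hx, hx0⟩ := Multiset.mem_map.1 h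
    exact hs (antipode_eq_zero.1 hx0 ▸ hx)

theorem even_card_of_map_antipode_eq_self {s : Multiset ℂ} (hs : 0 ∉ s)
    (hinv : s.map antipode = s) : Even (Multiset.card s) :=
  Multiset.even_card_of_map_eq_self antipode_involutive hinv
    fun _ hx => antipode_ne_self (ne_of_mem_of_not_mem hx hs)

theorem map_antipode_eq_of_add_eq {A B : Multiset ℂ} (hA : 0 ∉ A) (hB : 0 ∉ B)
    (hAB : Disjoint A B) {n₁ n₂ : ℕ}
    (h : n₁ • {0} + (A.map antipode + B) = n₂ • {0} + (A + B.map antipode)) :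
    A.map antipode = A ∧ B.map antipode = B := by
  have hA' := zero_notMem_map_antipode hA
  have hB' := zero_notMem_map_antipode hB
  have hAB' : Disjoint (A.map antipode) (B.map antipode) :=
    Multiset.disjoint_map_map.2 fun _ hx _ hy hxy =>
      Multiset.disjoint_left.1 hAB hx (antipode_injective hxy ▸ hy)
  constructor
  · refine Multiset.eq_of_add_eq_add_of_disjoint (t := n₁ • {0} + B)
      (v := n₂ • {0} + B.map antipode) (by convert h using 1 <;> abel) ?_ ?_
    · exact Multiset.disjoint_add_right.2 ⟨Multiset.disjoint_nsmul_singleton _ hA', hAB'⟩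
    · exact Multiset.disjoint_add_left.2
        ⟨(Multiset.disjoint_nsmul_singleton _ hA).symm, hAB.symm⟩
  · refine (Multiset.eq_of_add_eq_add_of_disjoint (t := n₁ • {0} + A.map antipode)
      (v := n₂ • {0} + A) (by convert h using 1 <;> abel) ?_ ?_).symm
    · exact Multiset.disjoint_add_right.2 ⟨Multiset.disjoint_nsmul_singleton _ hB, hAB.symm⟩
    · exact Multiset.disjoint_add_left.2 ⟨(Multiset.disjoint_nsmul_singleton _ hB').symm, hAB'⟩

noncomputable def hennebergF (m : ℕ) (c : ℂ) (A B : Multiset ℂ) (z : ℂ) : ℂ :=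
  c * (z ^ (m + 3))⁻¹ * (A.map (z - ·)).prod / (B.map (z - ·)).prod

section hennebergF

variable {m : ℕ} {c : ℂ} {A B : Multiset ℂ}

theorem hennebergF_mul {z : ℂ} (hz : z ≠ 0) (hzB : z ∉ B) :
    hennebergF m c A B z * z ^ (m + 3) * (B.map (z - ·)).prod = c * (A.map (z - ·)).prod := by
  have := Multiset.prod_map_sub_ne_zero hzB
  rw [hennebergF]
  field_simp

theorem conj_hennebergF (z : ℂ) :
    conj (hennebergF m c A B z) = conj c * (conj z ^ (m + 3))⁻¹ *
      (A.map (conj z - conj ·)).prod / (B.map (conj z - conj ·)).prod := by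
  simp [hennebergF, map_multiset_prod, Multiset.map_map]

theorem conj_hennebergF_antipode_mul (hA : 0 ∉ A) (hB : 0 ∉ B) {z : ℂ} (hz : z ≠ 0)
    (hzB : antipode z ∉ B) :
    conj (hennebergF m c A B (antipode z)) * z ^ Multiset.card A *
        ((-1) ^ Multiset.card B * (B.map conj).prod * (B.map (z - antipode ·)).prod) =
      conj c * (-1) ^ (m + 3 + Multiset.card A) * (A.map conj).prod *
        z ^ (m + 3 + Multiset.card B) * (A.map (z - antipode ·)).prod := by
  have hPB0 : (B.map (-1 / z - conj ·)).prod ≠ 0 := by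
    simpa [map_multiset_prod, Multiset.map_map] using
      (map_ne_zero conj).2 (Multiset.prod_map_sub_ne_zero hzB)
  have hPA := prod_map_neg_inv_sub_conj_mul_pow hA hz
  have hPB := prod_map_neg_inv_sub_conj_mul_pow hB hz
  rw [conj_hennebergF, conj_antipode, ← hPB]
  generalize (A.map (-1 / z - conj ·)).prod = PA at hPA ⊢
  generalize (B.map (-1 / z - conj ·)).prod = PB at hPB0 ⊢
  calc _ = conj c * (-1) ^ (m + 3) * z ^ (m + 3 + Multiset.card B) *
          (PA * z ^ Multiset.card A) := by
        rw [← inv_pow, inv_div, div_neg, div_one]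
        field_simp
        ring
    _ = _ := by rw [hPA]; ring

theorem mul_prod_map_sub_eq_of_hennebergF_antipode (hA : 0 ∉ A) (hB : 0 ∉ B) {z : ℂ}
    (hz : z ≠ 0) (hzB : z ∉ B) (hazB : antipode z ∉ B)
    (h : hennebergF m c A B (antipode z) = -conj (z ^ 4 * hennebergF m c A B z)) :
    conj c * (-1) ^ (m + Multiset.card A) * (A.map conj).prod *
        (((2 * m + 6 + Multiset.card B) • {0} + (A.map antipode + B)).map (z - ·)).prod =
      c * (-1) ^ Multiset.card B * (B.map conj).prod *
        (((Multiset.card A + 4) • {0} + (A + B.map antipode)).map (z - ·)).prod := by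
  have h' : conj (hennebergF m c A B (antipode z)) = -(z ^ 4 * hennebergF m c A B z) := by
    rw [h, map_neg, Complex.conj_conj]
  have hanti := conj_hennebergF_antipode_mul (m := m) (c := c) hA hB hz hazB
  have hmul := hennebergF_mul (m := m) (c := c) (A := A) hz hzB
  simp only [Multiset.map_add, Multiset.map_nsmul, Multiset.map_singleton, Multiset.map_map,
    Function.comp_def, Multiset.prod_add, Multiset.prod_nsmul, Multiset.prod_singleton, sub_zero]
  -- `hanti` times `z ^ (m + 3) * ∏ (z - b)`, then `h'` and `hmul` eliminate both values of `f`
  linear_combination z ^ (m + 3) * (B.map (z - ·)).prod * hanti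
    - z ^ (m + 3 + Multiset.card A) * (-1) ^ Multiset.card B * (B.map conj).prod *
      (B.map (z - antipode ·)).prod * (B.map (z - ·)).prod * h'
    + z ^ (Multiset.card A + 4) * (-1) ^ Multiset.card B * (B.map conj).prod *
      (B.map (z - antipode ·)).prod * hmul

theorem map_antipode_eq_of_hennebergF_antipode (hc : c ≠ 0) (hA : 0 ∉ A) (hB : 0 ∉ B)
    (hAB : Disjoint A B)
    (heq : ∀ z, z ≠ 0 → z ∉ B → antipode z ∉ B →
      hennebergF m c A B (antipode z) = -conj (z ^ 4 * hennebergF m c A B z)) :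
    A.map antipode = A ∧ B.map antipode = B := by
  have hgood : ∀ᶠ z in cofinite, z ≠ 0 ∧ z ∉ B ∧ antipode z ∉ B :=
    (eventually_cofinite_ne 0).and <| B.finite_toSet.eventually_cofinite_notMem.and <|
      antipode_injective.tendsto_cofinite.eventually B.finite_toSet.eventually_cofinite_notMem
  have hprod_ne : ∀ {s : Multiset ℂ}, 0 ∉ s → (s.map conj).prod ≠ 0 := fun hs =>
    Multiset.prod_ne_zero (by simpa using hs)
  refine map_antipode_eq_of_add_eq hA hB hAB <| Multiset.eq_of_infinite_mul_prod_map_sub_eq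
    ?_ ?_ <| frequently_cofinite_iff_infinite.1 <| Eventually.frequently <| hgood.mono
      fun z ⟨hz, hzB, hazB⟩ =>
        mul_prod_map_sub_eq_of_hennebergF_antipode hA hB hz hzB hazB (heq z hz hzB hazB)
  · exact mul_ne_zero (mul_ne_zero ((map_ne_zero conj).2 hc) (by simp)) (hprod_ne hA)
  · exact mul_ne_zero (mul_ne_zero hc (by simp)) (hprod_ne hB)

end hennebergF

theorem generalized_henneberg_antipodal_invariance
    (m M N : ℕ) (c : ℂ) (hc : c ≠ 0)
    (a : Fin M → ℂ) (b : Fin N → ℂ)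
    (ha : ∀ j, a j ≠ 0) (hb : ∀ j, b j ≠ 0)
    (hdisj : ∀ j k, a j ≠ b k)
    (f : ℂ → ℂ)
    (hf : ∀ z : ℂ, f z =
      c * (z ^ (m + 3))⁻¹ * (∏ j, (z - a j)) / (∏ j, (z - b j)))
    (heq : ∀ z : ℂ, z ≠ 0 → (∀ j, z ≠ b j) →
      (∀ j, -1 / (starRingEnd ℂ) z ≠ b j) →
      f (-1 / (starRingEnd ℂ) z) = -(starRingEnd ℂ) (z ^ 4 * f z)) :
    Multiset.map a Finset.univ.val =
      Multiset.map (fun j => -1 / (starRingEnd ℂ) (a j)) Finset.univ.val ∧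
    Multiset.map b Finset.univ.val =
      Multiset.map (fun j => -1 / (starRingEnd ℂ) (b j)) Finset.univ.val ∧
    Even M ∧ Even N := by
  set A := Multiset.map a Finset.univ.val
  set B := Multiset.map b Finset.univ.val
  have hA : 0 ∉ A := by simpa [A, eq_comm] using ha
  have hB : 0 ∉ B := by simpa [B, eq_comm] using hb
  have hf' : f = hennebergF m c A B := funext fun z => by
    simp [hf, hennebergF, A, B, Finset.prod_eq_multiset_prod, Function.comp_def]
  obtain ⟨hAinv, hBinv⟩ := map_antipode_eq_of_hennebergF_antipode hc hA hB
    (Multiset.disjoint_map_map.2 fun j _ k _ => hdisj j k) fun z hz hzB hazB => by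
      subst hf'
      exact heq z hz (by simpa [B, eq_comm] using hzB)
        (by simpa [B, antipode, eq_comm] using hazB)
  refine ⟨hAinv.symm.trans (Multiset.map_map _ _ _), hBinv.symm.trans (Multiset.map_map _ _ _),
    ?_, ?_⟩
  · simpa [A] using even_card_of_map_antipode_eq_self hA hAinv
  · simpa [B] using even_card_of_map_antipode_eq_self hB hBinv
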